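/- arXiv:2605.11448 — 5 statements merged into one kernel-verified Lean document; each statement's English description precedes it below -/
import Mathlib

section
/- Let D be a finite set, γ: D → ℝ^d a map whose image spans ℝ^d, and λ₁,…,λₙ ∈ ℝ^d vectors spanning ℝ^d. Suppose g and f are maps satisfying ⟨g(γ(x)), f(λᵢ)⟩ = ⟨γ(x), λᵢ⟩ for all x ∈ D and all i, and suppose there exist d linearly independent vectors among the λᵢ whose images under f remain linearly independent. Then there exists a unique invertible matrix A ∈ GL(d, ℝ) such that g(γ(x)) = A⁻ᵀ γ(x) for all x ∈ D and f(λᵢ) = A λᵢ for all i. -/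
/-!
Let `A` be the matrix sending the basis `λ (s j)` to the basis `f (λ (s j))`. Pairing against the
basis `f (λ (s j))` forces `g (γ x) = A⁻ᵀ γ x`; pairing against the spanning family `γ` then forces
`A⁻¹ f (λ i) = λ i`. Any other such matrix agrees with `A` on the basis `λ (s j)`.
-/

open Matrix

namespace Matrix

variable {K ι κ : Type*} [Field K] [Fintype ι]

theorem eq_of_dotProduct_eq_of_span_eq_top {v : κ → ι → K}
    (hv : Submodule.span K (Set.range v) = ⊤) {x y : ι → K}
    (h : ∀ k, v k ⬝ᵥ x = v k ⬝ᵥ y) : x = y := by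
  have hxy : (dotProductBilin K K).flip x = (dotProductBilin K K).flip y :=
    LinearMap.ext_on_range hv h
  exact dotProduct_eq x y fun u => by
    simpa [dotProduct_comm u] using LinearMap.congr_fun hxy u

variable [DecidableEq ι]

theorem eq_of_mulVec_eq_of_span_eq_top {v : κ → ι → K}
    (hv : Submodule.span K (Set.range v) = ⊤) {A B : Matrix ι ι K}
    (h : ∀ k, A *ᵥ v k = B *ᵥ v k) : A = B :=
  toLin'.injective (LinearMap.ext_on_range hv h)

theorem exists_isUnit_det_mulVec_eq {v w : ι → ι → K}
    (hv : LinearIndependent K v) (hw : LinearIndependent K w) :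
    ∃ A : Matrix ι ι K, IsUnit A.det ∧ ∀ j, A *ᵥ v j = w j := by
  let bv := Module.Basis.mk hv (hv.span_eq_top_of_card_eq_finrank' (by simp)).ge
  let bw := Module.Basis.mk hw (hw.span_eq_top_of_card_eq_finrank' (by simp)).ge
  let L := bv.equiv bw (Equiv.refl ι)
  refine ⟨LinearMap.toMatrix' L.toLinearMap, ?_, fun j => ?_⟩
  · rw [LinearMap.det_toMatrix']
    exact L.isUnit_det'
  · rw [LinearMap.toMatrix'_mulVec]
    simpa [bv, bw, L] using bv.equiv_apply j bw (Equiv.refl ι)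

end Matrix

theorem stmt0_general {d n : ℕ} {D : Type*}
    (γ : D → (Fin d → ℝ)) (lam : Fin n → (Fin d → ℝ))
    (hγ : Submodule.span ℝ (Set.range γ) = ⊤)
    (g f : (Fin d → ℝ) → (Fin d → ℝ))
    (hpair : ∀ (x : D) (i : Fin n), g (γ x) ⬝ᵥ f (lam i) = γ x ⬝ᵥ lam i)
    (hind : ∃ s : Fin d → Fin n,
      LinearIndependent ℝ (fun j => lam (s j)) ∧
      LinearIndependent ℝ (fun j => f (lam (s j)))) :
    ∃! A : Matrix (Fin d) (Fin d) ℝ, IsUnit A.det ∧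
      (∀ x : D, g (γ x) = (A⁻¹)ᵀ.mulVec (γ x)) ∧
      (∀ i : Fin n, f (lam i) = A.mulVec (lam i)) := by
  obtain ⟨s, hlam, hflam⟩ := hind
  obtain ⟨A, hdet, hA⟩ := exists_isUnit_det_mulVec_eq hlam hflam
  have hA_inv : ∀ j, A⁻¹ *ᵥ f (lam (s j)) = lam (s j) := fun j => by
    rw [← hA j, mulVec_mulVec, nonsing_inv_mul A hdet, one_mulVec]
  have hg : ∀ x, g (γ x) = (A⁻¹)ᵀ *ᵥ γ x := fun x =>
    eq_of_dotProduct_eq_of_span_eq_top (hflam.span_eq_top_of_card_eq_finrank' (by simp))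
      fun j => by
        rw [dotProduct_comm, hpair, dotProduct_mulVec, vecMul_transpose, hA_inv,
          dotProduct_comm]
  have hf : ∀ i, f (lam i) = A *ᵥ lam i := fun i => by
    have : A⁻¹ *ᵥ f (lam i) = lam i :=
      eq_of_dotProduct_eq_of_span_eq_top hγ fun x => by
        rw [dotProduct_mulVec, ← mulVec_transpose, ← hg, hpair]
    calc f (lam i) = A *ᵥ (A⁻¹ *ᵥ f (lam i)) := by
          rw [mulVec_mulVec, mul_nonsing_inv A hdet, one_mulVec]
      _ = A *ᵥ lam i := by rw [this]
  refine ⟨A, ⟨hdet, hg, hf⟩, fun B ⟨_, _, hfB⟩ => ?_⟩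
  exact eq_of_mulVec_eq_of_span_eq_top (hlam.span_eq_top_of_card_eq_finrank' (by simp))
    fun j => by rw [← hfB, hf]

/-- Linear-head equivalence: output-equivalent bilinear readouts are related by a
unique invertible linear change of coordinates. -/
theorem stmt0 {d n : ℕ} {D : Type*} [Fintype D]
    (γ : D → (Fin d → ℝ)) (lam : Fin n → (Fin d → ℝ))
    (hγ : Submodule.span ℝ (Set.range γ) = ⊤)
    (hlam : Submodule.span ℝ (Set.range lam) = ⊤)
    (g f : (Fin d → ℝ) → (Fin d → ℝ))
    (hpair : ∀ (x : D) (i : Fin n), g (γ x) ⬝ᵥ f (lam i) = γ x ⬝ᵥ lam i)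
    (hind : ∃ s : Fin d → Fin n,
      LinearIndependent ℝ (fun j => lam (s j)) ∧
      LinearIndependent ℝ (fun j => f (lam (s j)))) :
    ∃! A : Matrix (Fin d) (Fin d) ℝ, IsUnit A.det ∧
      (∀ x : D, g (γ x) = (A⁻¹)ᵀ.mulVec (γ x)) ∧
      (∀ i : Fin n, f (lam i) = A.mulVec (lam i)) :=
  stmt0_general γ lam hγ g f hpair hind
end

section
/- Let D be a finite set, γ: D → ℝ^d with image spanning ℝ^d, and λ₁,…,λₙ ∈ ℝ^d such that the differences {λᵢ − λ₁ : 2 ≤ i ≤ n} span ℝ^d. Suppose g, f satisfy: for all x ∈ D and all i, exp(⟨g(γ(x)), f(λᵢ)⟩)/∑ⱼ exp(⟨g(γ(x)), f(λⱼ)⟩) = exp(⟨γ(x), λᵢ⟩)/∑ⱼ exp(⟨γ(x), λⱼ⟩), and the transformed difference vectors {f(λᵢ) − f(λ₁)} also span ℝ^d. Then there exist a unique A ∈ GL(d, ℝ) and a unique c ∈ ℝ^d with g(γ(x)) = A⁻ᵀ γ(x) for all x ∈ D and f(λᵢ) = A λᵢ + c for all i. -/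
open Matrix Real Submodule Set

/-! Taking logarithms, equal softmax outputs force the two logit vectors to differ by a shift
depending only on `x`. Hence, with `uᵢ = f(λᵢ) - f(λ₀)` and `vᵢ = λᵢ - λ₀`, the pairing identity
`⟨g(γ x), uᵢ⟩ = ⟨γ x, vᵢ⟩` holds. As the `γ x` span, every linear relation among the `uᵢ` also holds
among the `vᵢ`, so `uᵢ ↦ vᵢ` is a linear map `N`, invertible because the `vᵢ` span. The pairing
identity then says `Nᵀ (γ x) = g(γ x)`, and `A = N⁻¹`, `c = f(λ₀) - A λ₀` do the job. Uniqueness: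
`A` is determined on the spanning vectors `vᵢ`, and then `c` by `i = 0`. -/

theorem sub_eq_sub_of_softmax_eq {ι : Type*} [Fintype ι] {z w : ι → ℝ}
    (h : ∀ i, exp (z i) / ∑ j, exp (z j) = exp (w i) / ∑ j, exp (w j)) (i k : ι) :
    z i - z k = w i - w k := by
  have log_softmax : ∀ (y : ι → ℝ) (l : ι),
      log (exp (y l) / ∑ j, exp (y j)) = y l - log (∑ j, exp (y j)) := fun y l => by
    have hsum : 0 < ∑ j, exp (y j) :=
      Finset.sum_pos (fun j _ => exp_pos (y j)) ⟨l, Finset.mem_univ l⟩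
    rw [log_div (exp_pos _).ne' hsum.ne', log_exp]
  have hi := congrArg log (h i)
  have hk := congrArg log (h k)
  rw [log_softmax, log_softmax] at hi hk
  linarith

theorem LinearMap.exists_comp_eq_of_surjective_of_ker_le {R M N P : Type*} [Ring R]
    [AddCommGroup M] [AddCommGroup N] [AddCommGroup P] [Module R M] [Module R N] [Module R P]
    {f : M →ₗ[R] N} {g : M →ₗ[R] P} (hf : Function.Surjective f) (hker : ker f ≤ ker g) :
    ∃ T : N →ₗ[R] P, T ∘ₗ f = g := by
  refine ⟨(ker f).liftQ g hker ∘ₗ (f.quotKerEquivOfSurjective hf).symm.toLinearMap, ?_⟩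
  ext x
  have hmk : (f.quotKerEquivOfSurjective hf).symm (f x) = (ker f).mkQ x :=
    (LinearEquiv.symm_apply_eq _).2 rfl
  simp [hmk]

section CommSemiring

variable {R m : Type*} [CommSemiring R]

theorem Matrix.dotProduct_linearCombination [Fintype m] {ι : Type*} [Fintype ι] (w : m → R)
    (v : ι → m → R) (c : ι → R) :
    w ⬝ᵥ Fintype.linearCombination R v c = ∑ i, c i * (w ⬝ᵥ v i) := by
  simp [Fintype.linearCombination_apply, dotProduct_sum, dotProduct_smul]

theorem Matrix.ext_of_mulVec_eq_of_span_eq_top {n : Type*} [Fintype n] [DecidableEq n]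
    {s : Set (n → R)} (hs : span R s = ⊤) {A B : Matrix m n R}
    (h : ∀ y ∈ s, A *ᵥ y = B *ᵥ y) : A = B :=
  Matrix.toLin'.injective (LinearMap.ext_on hs h)

theorem Matrix.eq_of_dotProduct_eq_of_span_eq_top_s3 [Fintype m] [DecidableEq m] {s : Set (m → R)}
    (hs : span R s = ⊤) {a b : m → R} (h : ∀ y ∈ s, y ⬝ᵥ a = y ⬝ᵥ b) : a = b :=
  (dotProductEquiv R m).injective <| LinearMap.ext_on hs fun y hy => by
    simpa [dotProduct_comm] using h y hy

end CommSemiring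

section CommRing

variable {R m : Type*} [CommRing R] [Fintype m] [DecidableEq m]

theorem Matrix.eq_and_eq_of_mulVec_add_eq {ι : Type*} {l : ι → m → R} {i₀ : ι}
    (hl : span R (range fun i => l i - l i₀) = ⊤) {A B : Matrix m m R} {c c' : m → R}
    (h : ∀ i, A *ᵥ l i + c = B *ᵥ l i + c') : A = B ∧ c = c' := by
  have hAB : A = B := by
    refine ext_of_mulVec_eq_of_span_eq_top hl ?_
    rintro _ ⟨i, rfl⟩
    rw [mulVec_sub, mulVec_sub]
    linear_combination (norm := module) h i - h i₀
  subst hAB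
  exact ⟨rfl, add_left_cancel (h i₀)⟩

variable {ι D : Type*} [Fintype ι] {u v : ι → m → R} {a γ : D → m → R}

theorem Matrix.exists_mulVec_eq_of_dotProduct_eq (hγ : span R (range γ) = ⊤)
    (hu : span R (range u) = ⊤) (h : ∀ x i, a x ⬝ᵥ u i = γ x ⬝ᵥ v i) :
    ∃ N : Matrix m m R, ∀ i, N *ᵥ u i = v i := by
  classical
  have hsurj : Function.Surjective (Fintype.linearCombination R u) :=
    (span_range_eq_top_iff_surjective_fintypeLinearCombination R u).1 hu
  have hker : LinearMap.ker (Fintype.linearCombination R u)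
      ≤ LinearMap.ker (Fintype.linearCombination R v) := by
    intro c hc
    rw [LinearMap.mem_ker] at hc ⊢
    refine eq_of_dotProduct_eq_of_span_eq_top_s3 hγ ?_
    rintro _ ⟨x, rfl⟩
    calc γ x ⬝ᵥ Fintype.linearCombination R v c = ∑ i, c i * (γ x ⬝ᵥ v i) :=
          dotProduct_linearCombination _ _ _
      _ = a x ⬝ᵥ Fintype.linearCombination R u c := by
          simp only [dotProduct_linearCombination, h]
      _ = γ x ⬝ᵥ 0 := by rw [hc, dotProduct_zero, dotProduct_zero]
  obtain ⟨T, hT⟩ := LinearMap.exists_comp_eq_of_surjective_of_ker_le hsurj hker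
  refine ⟨LinearMap.toMatrix' T, fun i => ?_⟩
  simpa using LinearMap.congr_fun hT (Pi.single i 1)

theorem Matrix.exists_isUnit_det_of_dotProduct_eq (hγ : span R (range γ) = ⊤)
    (hu : span R (range u) = ⊤) (hv : span R (range v) = ⊤)
    (h : ∀ x i, a x ⬝ᵥ u i = γ x ⬝ᵥ v i) :
    ∃ A : Matrix m m R, IsUnit A.det ∧ (∀ x, a x = (A⁻¹)ᵀ *ᵥ γ x) ∧ ∀ i, A *ᵥ v i = u i := by
  obtain ⟨N, hN⟩ := exists_mulVec_eq_of_dotProduct_eq hγ hu h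
  have hNt : ∀ x, a x = Nᵀ *ᵥ γ x := fun x => by
    refine eq_of_dotProduct_eq_of_span_eq_top_s3 hu ?_
    rintro _ ⟨i, rfl⟩
    rw [mulVec_transpose, dotProduct_comm (u i) (γ x ᵥ* N), ← dotProduct_mulVec, hN, ← h,
      dotProduct_comm]
  have hNunit : IsUnit N := by
    have hrange : LinearMap.range N.mulVecLin = ⊤ := by
      rw [eq_top_iff, ← hv, span_le]
      rintro _ ⟨i, rfl⟩
      exact ⟨u i, hN i⟩
    exact mulVec_surjective_iff_isUnit.1 (LinearMap.range_eq_top.1 hrange)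
  have hdet : IsUnit N.det := (isUnit_iff_isUnit_det N).1 hNunit
  refine ⟨N⁻¹, isUnit_nonsing_inv_det N hdet, ?_, fun i => ?_⟩
  · simpa only [nonsing_inv_nonsing_inv N hdet] using hNt
  · rw [← hN, mulVec_mulVec, nonsing_inv_mul N hdet, one_mulVec]

end CommRing

theorem stmt3_general {d n : ℕ} [NeZero n] {D : Type*}
    (γ : D → (Fin d → ℝ)) (lam : Fin n → (Fin d → ℝ))
    (hγ : Submodule.span ℝ (Set.range γ) = ⊤)
    (hdiff : Submodule.span ℝ (Set.range fun i : Fin n => lam i - lam 0) = ⊤)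
    (g f : (Fin d → ℝ) → (Fin d → ℝ))
    (hsm : ∀ (x : D) (i : Fin n),
      Real.exp (g (γ x) ⬝ᵥ f (lam i)) / ∑ j, Real.exp (g (γ x) ⬝ᵥ f (lam j))
        = Real.exp (γ x ⬝ᵥ lam i) / ∑ j, Real.exp (γ x ⬝ᵥ lam j))
    (hdiff' : Submodule.span ℝ
        (Set.range fun i : Fin n => f (lam i) - f (lam 0)) = ⊤) :
    ∃! p : Matrix (Fin d) (Fin d) ℝ × (Fin d → ℝ), IsUnit p.1.det ∧
      (∀ x : D, g (γ x) = (p.1⁻¹)ᵀ.mulVec (γ x)) ∧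
      (∀ i : Fin n, f (lam i) = p.1.mulVec (lam i) + p.2) := by
  have hpair : ∀ x i, g (γ x) ⬝ᵥ (f (lam i) - f (lam 0)) = γ x ⬝ᵥ (lam i - lam 0) :=
    fun x i => by simpa only [dotProduct_sub] using sub_eq_sub_of_softmax_eq (hsm x) i 0
  obtain ⟨A, hA, hgA, hvA⟩ := exists_isUnit_det_of_dotProduct_eq hγ hdiff' hdiff hpair
  have hfA : ∀ i, f (lam i) = A *ᵥ lam i + (f (lam 0) - A *ᵥ lam 0) := fun i => by
    have hdiffA := hvA i
    rw [mulVec_sub] at hdiffA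
    linear_combination (norm := module) -hdiffA
  refine ⟨(A, f (lam 0) - A *ᵥ lam 0), ⟨hA, hgA, hfA⟩, ?_⟩
  rintro ⟨B, c⟩ ⟨-, -, hfB⟩
  obtain ⟨hBA, hc⟩ := eq_and_eq_of_mulVec_add_eq hdiff fun i => (hfB i).symm.trans (hfA i)
  exact Prod.ext hBA hc

/-- Softmax-head equivalence: equal softmax probabilities force the hidden
states and readouts to be related by a unique invertible linear map together
with a unique common shift `c` on the readout vectors. -/
theorem stmt3 {d n : ℕ} [NeZero n] {D : Type*} [Fintype D]
    (γ : D → (Fin d → ℝ)) (lam : Fin n → (Fin d → ℝ))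
    (hγ : Submodule.span ℝ (Set.range γ) = ⊤)
    (hdiff : Submodule.span ℝ (Set.range fun i : Fin n => lam i - lam 0) = ⊤)
    (g f : (Fin d → ℝ) → (Fin d → ℝ))
    (hsm : ∀ (x : D) (i : Fin n),
      Real.exp (g (γ x) ⬝ᵥ f (lam i)) / ∑ j, Real.exp (g (γ x) ⬝ᵥ f (lam j))
        = Real.exp (γ x ⬝ᵥ lam i) / ∑ j, Real.exp (γ x ⬝ᵥ lam j))
    (hdiff' : Submodule.span ℝ
        (Set.range fun i : Fin n => f (lam i) - f (lam 0)) = ⊤) :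
    ∃! p : Matrix (Fin d) (Fin d) ℝ × (Fin d → ℝ), IsUnit p.1.det ∧
      (∀ x : D, g (γ x) = (p.1⁻¹)ᵀ.mulVec (γ x)) ∧
      (∀ i : Fin n, f (lam i) = p.1.mulVec (lam i) + p.2) :=
  stmt3_general γ lam hγ hdiff g f hsm hdiff'
end

section
/- Let V ⊆ C(ℝⁿ) be a finite-dimensional linear subspace of continuous functions that is translation-invariant: f ∈ V implies the translate x ↦ f(x + a) lies in V for every a ∈ ℝⁿ. Then every element of V is infinitely differentiable, and every partial derivative ∂ⱼ maps V into itself. -/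
open MeasureTheory Filter Topology Convolution

private theorem mem_pointwise_closure {n : ℕ} (V : Submodule ℝ C((Fin n → ℝ), ℝ))
    [FiniteDimensional ℝ V] (F : (Fin n → ℝ) → ℝ) (g : ℕ → C((Fin n → ℝ), ℝ))
    (hg : ∀ k, g k ∈ V) (hlim : ∀ x, Tendsto (fun k => g k x) atTop (𝓝 (F x))) :
    ∃ h ∈ V, ∀ x, h x = F x := by
  classical
  let π : C((Fin n → ℝ), ℝ) →ₗ[ℝ] ((Fin n → ℝ) → ℝ) := ContinuousMap.coeFnLinearMap ℝ
  let V' : Submodule ℝ ((Fin n → ℝ) → ℝ) := V.map π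
  haveI : FiniteDimensional ℝ V' := Module.Finite.map V π
  have hcl : IsClosed (V' : Set ((Fin n → ℝ) → ℝ)) := V'.closed_of_finiteDimensional
  have hFmem : F ∈ V' := by
    exact hcl.mem_of_tendsto (tendsto_pi_nhds.mpr hlim)
      (Eventually.of_forall fun k => Submodule.mem_map_of_mem (hg k))
  obtain ⟨h, hhV, hh⟩ := hFmem
  exact ⟨h, hhV, fun x => congrFun hh x⟩

private theorem moll_mem {n : ℕ} (V : Submodule ℝ C((Fin n → ℝ), ℝ)) [FiniteDimensional ℝ V]
    (hV : ∀ f ∈ V, ∀ a : Fin n → ℝ,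
      (f.comp ⟨fun x => x + a, by continuity⟩) ∈ V)
    (f : C((Fin n → ℝ), ℝ)) (hf : f ∈ V) (φ : (Fin n → ℝ) → ℝ) (hφc : Continuous φ)
    (hφs : HasCompactSupport φ) :
    ∃ g ∈ V, ∀ x, (g : C((Fin n → ℝ), ℝ)) x = ∫ a, φ a * f (x + a) := by
  classical
  let Φ : (Fin n → ℝ) → V := fun a => ⟨f.comp ⟨fun x => x + a, by continuity⟩, hV f hf a⟩
  have hΦcont : Continuous Φ := by
    apply Continuous.subtype_mk
    have : (fun a : Fin n → ℝ => f.comp ⟨fun x => x + a, by continuity⟩)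
        = ⇑(ContinuousMap.curry ⟨fun p : (Fin n → ℝ) × (Fin n → ℝ) => f (p.2 + p.1),
            by fun_prop⟩) := by
      ext a x
      simp [ContinuousMap.curry_apply]
    rw [this]
    exact (ContinuousMap.curry _).continuous
  let b := Module.finBasis ℝ V
  let c : Fin (Module.finrank ℝ V) → (Fin n → ℝ) → ℝ := fun i a => b.coord i (Φ a)
  have hccont : ∀ i, Continuous (c i) := fun i =>
    (LinearMap.continuous_of_finiteDimensional (b.coord i)).comp hΦcont
  let g0 : V := ∑ i, (∫ a, φ a * c i a) • b i
  refine ⟨(g0 : C((Fin n → ℝ), ℝ)), g0.2, fun x => ?_⟩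
  let evx : C((Fin n → ℝ), ℝ) →ₗ[ℝ] ℝ :=
    { toFun := fun u => u x, map_add' := fun u v => rfl, map_smul' := fun c u => rfl }
  have hL : (g0 : C((Fin n → ℝ), ℝ)) x = ∑ i, (∫ a, φ a * c i a) * (b i : C((Fin n → ℝ), ℝ)) x := by
    change evx (V.subtype g0) = _
    simp only [g0, map_sum, _root_.map_smul]
    rfl
  have hexp : ∀ a, f (x + a) = ∑ i, c i a * ((b i : C((Fin n → ℝ), ℝ)) x) := by
    intro a
    have := b.sum_repr (Φ a)
    have h2 : evx (V.subtype (Φ a)) = f (x + a) := rfl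
    rw [← h2, ← this]
    simp only [map_sum, _root_.map_smul]
    rfl
  rw [hL]
  have hint : ∀ i : Fin (Module.finrank ℝ V), Integrable
      (fun a => φ a * (c i a * ((b i : C((Fin n → ℝ), ℝ)) x))) := by
    intro i
    apply Continuous.integrable_of_hasCompactSupport
    · fun_prop
    · exact (hφs.mul_right)
  calc ∑ i, (∫ a, φ a * c i a) * ((b i : C((Fin n → ℝ), ℝ)) x)
      = ∑ i, (∫ a, φ a * c i a * ((b i : C((Fin n → ℝ), ℝ)) x)) := by
        refine Finset.sum_congr rfl fun i _ => ?_
        rw [integral_mul_const]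
    _ = ∫ a, ∑ i, φ a * c i a * ((b i : C((Fin n → ℝ), ℝ)) x) := by
        rw [← integral_finset_sum]
        intro i _
        simpa [mul_assoc] using hint i
    _ = ∫ a, φ a * f (x + a) := by
        congr 1
        ext a
        rw [hexp a, Finset.mul_sum]
        simp [mul_assoc]

private def smoothSub (n : ℕ) : Submodule ℝ C((Fin n → ℝ), ℝ) where
  carrier := {u | ContDiff ℝ (⊤ : ℕ∞) (u : (Fin n → ℝ) → ℝ)}
  add_mem' := by
    intro a b ha hb
    simp only [Set.mem_setOf_eq, ContinuousMap.coe_add] at *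
    exact ha.add hb
  zero_mem' := by
    simp only [Set.mem_setOf_eq, ContinuousMap.coe_zero]
    exact contDiff_const
  smul_mem' := by
    intro c u hu
    simp only [Set.mem_setOf_eq, ContinuousMap.coe_smul] at *
    exact hu.const_smul c

private theorem smooth_of_mem {n : ℕ} (V : Submodule ℝ C((Fin n → ℝ), ℝ)) [FiniteDimensional ℝ V]
    (hV : ∀ f ∈ V, ∀ a : Fin n → ℝ,
      (f.comp ⟨fun x => x + a, by continuity⟩) ∈ V)
    (f : C((Fin n → ℝ), ℝ)) (hf : f ∈ V) : ContDiff ℝ (⊤ : ℕ∞) (f : (Fin n → ℝ) → ℝ) := by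
  classical
  let φ : ℕ → ContDiffBump (0 : Fin n → ℝ) := fun k =>
    ⟨((k : ℝ) + 1)⁻¹, 2 * ((k : ℝ) + 1)⁻¹, by positivity, by
      nlinarith [inv_pos.mpr (by positivity : (0:ℝ) < (k:ℝ)+1)]⟩
  let ψ : ℕ → (Fin n → ℝ) → ℝ := fun k => (φ k).normed volume
  have hψc : ∀ k, Continuous (ψ k) := fun k => (φ k).continuous_normed
  have hψs : ∀ k, HasCompactSupport (ψ k) := fun k => (φ k).hasCompactSupport_normed
  choose g hgV hgx using fun k => moll_mem V hV f hf (ψ k) (hψc k) (hψs k)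
  have hconv : ∀ k x, (g k : C((Fin n → ℝ), ℝ)) x
      = (ψ k ⋆[ContinuousLinearMap.lsmul ℝ ℝ, volume] ⇑f) x := by
    intro k x
    rw [hgx k x, convolution_def]
    simp only [ContinuousLinearMap.lsmul_apply]
    have := MeasureTheory.integral_neg_eq_self (fun t => ψ k t • f (x - t))
      (volume : Measure (Fin n → ℝ))
    rw [← this]
    congr 1
    ext a
    simp [ψ, (φ k).normed_neg, smul_eq_mul, sub_neg_eq_add]
  have hrOut : Tendsto (fun k : ℕ => (φ k).rOut) atTop (𝓝 0) := by
    have h0 : Tendsto (fun k : ℕ => ((k:ℝ)+1)⁻¹) atTop (𝓝 0) :=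
      tendsto_inv_atTop_zero.comp (tendsto_atTop_add_const_right atTop 1 tendsto_natCast_atTop_atTop)
    simpa using h0.const_mul 2
  have hten : ∀ x, Tendsto (fun k => (g k : C((Fin n → ℝ), ℝ)) x) atTop (𝓝 (f x)) := by
    intro x
    have := ContDiffBump.convolution_tendsto_right_of_continuous (φ := φ) (μ := volume)
      hrOut f.continuous x
    exact this.congr fun k => (hconv k x).symm
  let W := V ⊓ smoothSub n
  haveI : FiniteDimensional ℝ W := Submodule.finiteDimensional_of_le (inf_le_left)
  have hgW : ∀ k, g k ∈ W := by
    intro k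
    refine ⟨hgV k, ?_⟩
    show ContDiff ℝ (⊤ : ℕ∞) (g k : (Fin n → ℝ) → ℝ)
    have hco : ⇑(g k) = ψ k ⋆[ContinuousLinearMap.lsmul ℝ ℝ, volume] ⇑f := funext (hconv k)
    rw [hco]
    exact HasCompactSupport.contDiff_convolution_left _ (hψs k) ((φ k).contDiff_normed)
      (f.continuous.locallyIntegrable)
  obtain ⟨h, hhW, hh⟩ := mem_pointwise_closure W ⇑f g hgW hten
  have : h = f := ContinuousMap.ext hh
  rw [← this]
  exact hhW.2

private theorem deriv_mem {n : ℕ} (V : Submodule ℝ C((Fin n → ℝ), ℝ)) [FiniteDimensional ℝ V]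
    (hV : ∀ f ∈ V, ∀ a : Fin n → ℝ,
      (f.comp ⟨fun x => x + a, by continuity⟩) ∈ V)
    (f : C((Fin n → ℝ), ℝ)) (hf : f ∈ V) (hdiff : Differentiable ℝ (f : (Fin n → ℝ) → ℝ))
    (v : Fin n → ℝ) :
    ∃ g ∈ V, ∀ x, (g : C((Fin n → ℝ), ℝ)) x = fderiv ℝ (f : (Fin n → ℝ) → ℝ) x v := by
  classical
  let t : ℕ → ℝ := fun k => ((k : ℝ) + 1)⁻¹
  have ht0 : Tendsto t atTop (𝓝 0) :=
    tendsto_inv_atTop_zero.comp (tendsto_atTop_add_const_right atTop 1 tendsto_natCast_atTop_atTop)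
  have htne : ∀ k, t k ≠ 0 := fun k => by positivity
  let g : ℕ → C((Fin n → ℝ), ℝ) := fun k =>
    ((k : ℝ) + 1) • (f.comp ⟨fun x => x + t k • v, by continuity⟩ - f)
  have hgV : ∀ k, g k ∈ V :=
    fun k => V.smul_mem _ (V.sub_mem (hV f hf _) hf)
  refine mem_pointwise_closure V _ g hgV fun x => ?_
  have hline : HasDerivAt (fun s : ℝ => x + s • v) v 0 := by
    simpa using ((hasDerivAt_id (0:ℝ)).smul_const v).const_add x
  have hq : HasDerivAt (fun s : ℝ => f (x + s • v)) (fderiv ℝ (⇑f) x v) 0 := by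
    have := (hdiff (x + (0:ℝ) • v)).hasFDerivAt.comp_hasDerivAt 0 hline
    simpa [Function.comp_def] using this
  have hslope := hasDerivAt_iff_tendsto_slope.mp hq
  have hts : Tendsto t atTop (𝓝[≠] (0:ℝ)) :=
    tendsto_nhdsWithin_iff.mpr ⟨ht0, Eventually.of_forall fun k => htne k⟩
  have := hslope.comp hts
  refine this.congr fun k => ?_
  show slope (fun s : ℝ => f (x + s • v)) 0 (t k) = (g k) x
  rw [slope_def_field]
  simp only [g, ContinuousMap.smul_apply, ContinuousMap.sub_apply, ContinuousMap.comp_apply,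
    ContinuousMap.coe_mk, sub_zero, smul_eq_mul]
  field_simp [t]
  simp only [zero_smul, add_zero, t]
  field_simp

private theorem flow_eq_exp {d : ℕ} (B : (Fin d → ℝ) →L[ℝ] (Fin d → ℝ))
    (γ : ℝ → (Fin d → ℝ)) (hγ : ∀ s, HasDerivAt γ (B (γ s)) s) (s : ℝ) :
    γ s = NormedSpace.exp (s • B) (γ 0) := by
  have hw : ∀ t : ℝ, HasDerivAt (fun t : ℝ => (NormedSpace.exp (t • -B)) (γ t)) 0 t := by
    intro t
    have h1 := hasDerivAt_exp_smul_const (𝕂 := ℝ) (-B) t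
    have h3 := h1.clm_apply (hγ t)
    refine h3.congr_deriv ?_
    rw [ContinuousLinearMap.mul_apply]
    simp
  have hwc : (NormedSpace.exp (s • -B)) (γ s) = (NormedSpace.exp ((0:ℝ) • -B)) (γ 0) := by
    have hdw : Differentiable ℝ (fun t : ℝ => (NormedSpace.exp (t • -B)) (γ t)) :=
      fun t => (hw t).differentiableAt
    have hfz : ∀ t : ℝ, fderiv ℝ (fun t : ℝ => (NormedSpace.exp (t • -B)) (γ t)) t = 0 := by
      intro t
      rw [(hw t).hasFDerivAt.fderiv]
      ext r
      simp
    exact is_const_of_fderiv_eq_zero hdw hfz s 0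
  have h0 : (NormedSpace.exp ((0:ℝ) • -B)) (γ 0) = γ 0 := by
    simp [NormedSpace.exp_zero]
  have hst := hwc.trans h0
  have hinv : NormedSpace.exp (s • B) * NormedSpace.exp (s • -B) = 1 := by
    rw [← NormedSpace.exp_add_of_commute_of_mem_ball (𝕂 := ℝ) (x := s • B) (y := s • -B) ?_
      (by rw [NormedSpace.expSeries_radius_eq_top]; exact edist_lt_top _ _)
      (by rw [NormedSpace.expSeries_radius_eq_top]; exact edist_lt_top _ _)]
    · simp [NormedSpace.exp_zero]
    · rw [smul_neg]
      exact (Commute.refl (s • B)).neg_right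
  calc γ s = (NormedSpace.exp (s • B) * NormedSpace.exp (s • -B)) (γ s) := by
        rw [hinv]; simp
    _ = NormedSpace.exp (s • B) ((NormedSpace.exp (s • -B)) (γ s)) := by
        rw [ContinuousLinearMap.mul_apply]
    _ = NormedSpace.exp (s • B) (γ 0) := by rw [hst]

set_option maxHeartbeats 1000000 in
private theorem analytic_of_mem {n : ℕ} (V : Submodule ℝ C((Fin n → ℝ), ℝ))
    [FiniteDimensional ℝ V]
    (hV : ∀ f ∈ V, ∀ a : Fin n → ℝ,
      (f.comp ⟨fun x => x + a, by continuity⟩) ∈ V)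
    (f : C((Fin n → ℝ), ℝ)) (hf : f ∈ V) :
    AnalyticOnNhd ℝ (f : (Fin n → ℝ) → ℝ) Set.univ := by
  classical
  have hdiff : ∀ u : V, Differentiable ℝ ((u : C((Fin n → ℝ), ℝ)) : (Fin n → ℝ) → ℝ) := by
    intro u
    exact (smooth_of_mem V hV u u.2).differentiable (by simp)
  have hDex : ∀ (v : Fin n → ℝ) (u : V), ∃ w : V, ∀ x,
      ((w : C((Fin n → ℝ), ℝ)) : (Fin n → ℝ) → ℝ) x
        = fderiv ℝ ((u : C((Fin n → ℝ), ℝ)) : (Fin n → ℝ) → ℝ) x v := by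
    intro v u
    obtain ⟨g, hgV, hg⟩ := deriv_mem V hV u u.2 (hdiff u) v
    exact ⟨⟨g, hgV⟩, hg⟩
  choose D hD using hDex
  -- translations inside V
  let Φ : (Fin n → ℝ) → V := fun a => ⟨f.comp ⟨fun z => z + a, by continuity⟩, hV f hf a⟩
  have hΦapp : ∀ a z, ((Φ a : C((Fin n → ℝ), ℝ)) : (Fin n → ℝ) → ℝ) z = f (z + a) :=
    fun a z => rfl
  have hΦ0 : Φ 0 = ⟨f, hf⟩ := Subtype.ext (ContinuousMap.ext fun z => by
    rw [hΦapp]; simp)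
  -- linearity of D in u
  have hDadd : ∀ (v : Fin n → ℝ) (u w : V), D v (u + w) = D v u + D v w := by
    intro v u w
    refine Subtype.ext (ContinuousMap.ext fun z => ?_)
    have hc : ((((u + w) : V) : C((Fin n → ℝ), ℝ)) : (Fin n → ℝ) → ℝ)
        = fun y => (u : C((Fin n → ℝ), ℝ)) y + (w : C((Fin n → ℝ), ℝ)) y := rfl
    rw [Submodule.coe_add, ContinuousMap.add_apply]
    simp only [hD]
    rw [hc, fderiv_fun_add ((hdiff u).differentiableAt) ((hdiff w).differentiableAt)]
    rfl
  have hDsmul : ∀ (v : Fin n → ℝ) (c : ℝ) (u : V), D v (c • u) = c • D v u := by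
    intro v c u
    refine Subtype.ext (ContinuousMap.ext fun z => ?_)
    have hc : ((((c • u) : V) : C((Fin n → ℝ), ℝ)) : (Fin n → ℝ) → ℝ)
        = fun y => c • (u : C((Fin n → ℝ), ℝ)) y := rfl
    rw [Submodule.coe_smul, ContinuousMap.smul_apply]
    simp only [hD]
    rw [hc, fderiv_fun_const_smul ((hdiff u).differentiableAt)]
    rfl
  have hDvadd : ∀ (v v' : Fin n → ℝ) (u : V), D (v + v') u = D v u + D v' u := by
    intro v v' u
    refine Subtype.ext (ContinuousMap.ext fun z => ?_)
    rw [Submodule.coe_add, ContinuousMap.add_apply, hD, hD, hD, map_add]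
  have hDvsmul : ∀ (c : ℝ) (v : Fin n → ℝ) (u : V), D (c • v) u = c • D v u := by
    intro c v u
    refine Subtype.ext (ContinuousMap.ext fun z => ?_)
    rw [Submodule.coe_smul, ContinuousMap.smul_apply, hD, hD]
    exact _root_.map_smul (fderiv ℝ (((u : C((Fin n → ℝ), ℝ)) : (Fin n → ℝ) → ℝ)) z) c v
  let M : (Fin n → ℝ) →ₗ[ℝ] (Module.End ℝ V) :=
    { toFun := fun v =>
        { toFun := D v, map_add' := hDadd v, map_smul' := hDsmul v }
      map_add' := fun v v' => LinearMap.ext fun u => hDvadd v v' u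
      map_smul' := fun c v => LinearMap.ext fun u => hDvsmul c v u }
  -- evaluations span the dual, key derivative identity
  let ev : (Fin n → ℝ) → Module.Dual ℝ V := fun y =>
    { toFun := fun u => (u : C((Fin n → ℝ), ℝ)) y
      map_add' := fun u w => rfl
      map_smul' := fun c u => rfl }
  have hspan : Submodule.span ℝ (Set.range ev) = ⊤ := by
    set S := Submodule.span ℝ (Set.range ev) with hS
    have hco : S.dualCoannihilator = ⊥ := by
      rw [Submodule.eq_bot_iff]
      intro u hu
      rw [Submodule.mem_dualCoannihilator] at hu
      have hz : ∀ y, (u : C((Fin n → ℝ), ℝ)) y = 0 := fun y =>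
        hu (ev y) (Submodule.subset_span ⟨y, rfl⟩)
      exact Subtype.ext (ContinuousMap.ext fun y => by simpa using hz y)
    have hfr := Subspace.finrank_add_finrank_dualCoannihilator_eq S
    rw [hco, finrank_bot] at hfr
    apply Submodule.eq_top_of_finrank_eq
    rw [Subspace.dual_finrank_eq]
    omega
  have hfder : ∀ (a y v : Fin n → ℝ), fderiv ℝ (fun z => f (z + a)) y v
      = fderiv ℝ (f : (Fin n → ℝ) → ℝ) (y + a) v := by
    intro a y v
    have h1 : HasFDerivAt (fun z : Fin n → ℝ => z + a)
        (ContinuousLinearMap.id ℝ (Fin n → ℝ)) y := (hasFDerivAt_id y).add_const a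
    have h2 : HasFDerivAt (fun z : Fin n → ℝ => f (z + a))
        ((fderiv ℝ (f : (Fin n → ℝ) → ℝ) (y + a)).comp (ContinuousLinearMap.id ℝ (Fin n → ℝ)))
        y := (hdiff ⟨f, hf⟩ (y + a)).hasFDerivAt.comp y h1
    rw [h2.fderiv]
    rfl
  have key : ∀ (φ : Module.Dual ℝ V) (x : Fin n → ℝ) (s : ℝ),
      HasDerivAt (fun t : ℝ => φ (Φ (t • x))) (φ (D x (Φ (s • x)))) s := by
    intro φ x
    have hφmem : φ ∈ Submodule.span ℝ (Set.range ev) := by rw [hspan]; trivial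
    induction hφmem using Submodule.span_induction with
    | mem ψ hψ =>
      obtain ⟨y, rfl⟩ := hψ
      intro s
      have hline : HasDerivAt (fun t : ℝ => y + t • x) x s := by
        simpa using ((hasDerivAt_id s).smul_const x).const_add y
      have h2 : HasDerivAt (fun t : ℝ => f (y + t • x))
          (fderiv ℝ (f : (Fin n → ℝ) → ℝ) (y + s • x) x) s := by
        simpa [Function.comp_def] using (hdiff ⟨f, hf⟩ (y + s • x)).hasFDerivAt.comp_hasDerivAt s hline
      have hval : (ev y) (D x (Φ (s • x))) = fderiv ℝ (f : (Fin n → ℝ) → ℝ) (y + s • x) x := by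
        show ((D x (Φ (s • x)) : C((Fin n → ℝ), ℝ)) : (Fin n → ℝ) → ℝ) y = _
        rw [hD]
        exact hfder (s • x) y x
      rw [hval]
      exact h2
    | zero => intro s; simpa using hasDerivAt_const s (0:ℝ)
    | add ψ χ _ _ hψ hχ => intro s; simpa [Pi.add_def] using (hψ s).add (hχ s)
    | smul c ψ _ hψ => intro s; simpa using (hψ s).const_mul c
  -- pass to coordinates
  let b := Module.finBasis ℝ V
  let e : V ≃ₗ[ℝ] (Fin (Module.finrank ℝ V) → ℝ) := b.equivFun
  let AL : (Fin n → ℝ) →ₗ[ℝ]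
      ((Fin (Module.finrank ℝ V) → ℝ) →L[ℝ] (Fin (Module.finrank ℝ V) → ℝ)) :=
    { toFun := fun v => LinearMap.toContinuousLinearMap (e.conj (M v))
      map_add' := by intro v v'; simp only [LinearMap.map_add, LinearEquiv.map_add]
      map_smul' := by intro c v
                      simp only [LinearMap.map_smul, LinearEquiv.map_smul, RingHom.id_apply] }
  have hALapp : ∀ (v : Fin n → ℝ) (u : V), AL v (e u) = e (D v u) := by
    intro v u
    show (LinearMap.toContinuousLinearMap (e.conj (M v))) (e u) = _
    rw [LinearMap.coe_toContinuousLinearMap', LinearEquiv.conj_apply]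
    simp only [LinearMap.coe_comp, Function.comp_apply, LinearEquiv.coe_coe,
      LinearEquiv.symm_apply_apply]
    rfl
  have hODE : ∀ (x : Fin n → ℝ) (s : ℝ),
      HasDerivAt (fun t : ℝ => e (Φ (t • x))) (AL x (e (Φ (s • x)))) s := by
    intro x s
    rw [hasDerivAt_pi]
    intro i
    have hcomp := key (b.coord i) x s
    have h1 : (fun t : ℝ => e (Φ (t • x)) i) = fun t => b.coord i (Φ (t • x)) := by
      funext u
      simp [e, Module.Basis.equivFun_apply, Module.Basis.coord_apply]
    have h2 : AL x (e (Φ (s • x))) i = b.coord i (D x (Φ (s • x))) := by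
      rw [hALapp]
      simp [e, Module.Basis.equivFun_apply, Module.Basis.coord_apply]
    rw [h1, h2]
    exact hcomp
  -- solve the linear ODE by the exponential
  have hflow : ∀ (x : Fin n → ℝ) (s : ℝ),
      e (Φ (s • x)) = (NormedSpace.exp (s • AL x)) (e (Φ 0)) := by
    intro x s
    have := flow_eq_exp (AL x) (fun t => e (Φ (t • x))) (fun s => hODE x s) s
    simpa using this
  -- representation of f
  let vf := e (⟨f, hf⟩ : V)
  let L2 : (Fin (Module.finrank ℝ V) → ℝ) →L[ℝ] ℝ :=
    LinearMap.toContinuousLinearMap ((ev 0) ∘ₗ (e.symm : (Fin (Module.finrank ℝ V) → ℝ) →ₗ[ℝ] V))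
  have hrep : ∀ x, f x = L2 (NormedSpace.exp (AL x) vf) := by
    intro x
    have h1 := hflow x 1
    rw [one_smul, one_smul, hΦ0] at h1
    have h2 : f x = ev 0 (Φ x) := by
      show f x = ((Φ x : C((Fin n → ℝ), ℝ)) : (Fin n → ℝ) → ℝ) 0
      rw [hΦapp]
      simp
    rw [h2]
    have h3 : ev 0 (Φ x) = L2 (e (Φ x)) := by
      show _ = (LinearMap.toContinuousLinearMap _) (e (Φ x))
      rw [LinearMap.coe_toContinuousLinearMap']
      simp
    rw [h3, h1]
  -- analyticity
  have hAna : AnalyticOnNhd ℝ (fun x => L2 (NormedSpace.exp (AL x) vf)) Set.univ := by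
    intro x _
    have a1 : AnalyticAt ℝ (fun y : Fin n → ℝ => AL y) x := by
      have := (LinearMap.toContinuousLinearMap AL).analyticAt x
      have hc : ⇑(LinearMap.toContinuousLinearMap AL) = fun y => AL y := by
        rw [LinearMap.coe_toContinuousLinearMap']
      rwa [hc] at this
    have a2 : AnalyticAt ℝ NormedSpace.exp (AL x) :=
      NormedSpace.analyticAt_exp_of_mem_ball _ (by
        rw [NormedSpace.expSeries_radius_eq_top]; exact edist_lt_top _ _)
    have a3 : AnalyticAt ℝ (fun N : (Fin (Module.finrank ℝ V) → ℝ) →L[ℝ]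
        (Fin (Module.finrank ℝ V) → ℝ) => L2 (N vf)) (NormedSpace.exp (AL x)) := by
      have := (L2.comp ((ContinuousLinearMap.apply ℝ (Fin (Module.finrank ℝ V) → ℝ)) vf)).analyticAt
        (NormedSpace.exp (AL x))
      exact this
    exact (a3.comp a2).comp a1
  have : (f : (Fin n → ℝ) → ℝ) = fun x => L2 (NormedSpace.exp (AL x) vf) := funext hrep
  rw [this]
  exact hAna

/-- A finite-dimensional translation-invariant subspace of `C(ℝⁿ)` consists of
smooth functions and is stable under every partial derivative. -/
theorem stmt6 {n : ℕ} (V : Submodule ℝ C((Fin n → ℝ), ℝ))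
    [FiniteDimensional ℝ V]
    (hV : ∀ f ∈ V, ∀ a : Fin n → ℝ,
      (f.comp ⟨fun x => x + a, by continuity⟩) ∈ V) :
    (∀ f ∈ V, ContDiff ℝ (⊤ : ℕ∞) (f : (Fin n → ℝ) → ℝ)) ∧
    (∀ f ∈ V, ∀ j : Fin n, ∃ g ∈ V,
      ∀ x, (g : (Fin n → ℝ) → ℝ) x = fderiv ℝ (f : (Fin n → ℝ) → ℝ) x (Pi.single j 1)) := by
  constructor
  · intro f hf
    exact (analytic_of_mem V hV f hf).contDiff
  · intro f hf j
    have hdiff : Differentiable ℝ (f : (Fin n → ℝ) → ℝ) :=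
      (smooth_of_mem V hV f hf).differentiable (by simp)
    exact deriv_mem V hV f hf hdiff (Pi.single j 1)
end

section
/- Suppose (h₁, V₁) on H₁ and (h₂, V₂) on H₂ realize the same finite-dimensional concept family C ⊆ ℝ^X (i.e., {ℓ∘h₁ : ℓ ∈ V₁} = {ℓ∘h₂ : ℓ ∈ V₂} = C) with both evaluation maps injective. Then the probe-visible quotients H₁/K(V₁) and H₂/K(V₂) are both canonically linearly isomorphic to C*, and hence to each other. -/
/-- The evaluation map sending a probe `ℓ ∈ V` to the function `x ↦ ℓ (h x)`. -/
def evalMap {X : Type*} {H : Type*} [AddCommGroup H] [Module ℝ H]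
    (h : X → H) (V : Submodule ℝ (Module.Dual ℝ H)) : V →ₗ[ℝ] (X → ℝ) where
  toFun ℓ := fun x => (ℓ : Module.Dual ℝ H) (h x)
  map_add' a b := by funext x; simp
  map_smul' c a := by funext x; simp

/-
The probe-visible quotient `H ⧸ K(V)` is the quotient of `H` by the coannihilator of `V`, and
the pairing `H ⧸ K(V) → V*`, `[v] ↦ (ℓ ↦ ℓ v)`, is always injective and, for
finite-dimensional `V`, bijective. An injective evaluation map identifies `V` with `C`, so
`H ⧸ K(V) ≃ C*`; since both realizations have the same concept family `C`, the two
identifications compose.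
-/

namespace Submodule

open Module

theorem dualCoannihilator_eq_iInf_ker {R M : Type*} [CommRing R] [AddCommGroup M] [Module R M]
    (W : Submodule R (Dual R M)) :
    W.dualCoannihilator = ⨅ ℓ : W, LinearMap.ker (ℓ : Dual R M) := by
  ext v
  simp only [mem_dualCoannihilator, mem_iInf, LinearMap.mem_ker, Subtype.forall]

noncomputable def quotIInfKerEquivDual {K M : Type*} [Field K] [AddCommGroup M] [Module K M]
    (W : Submodule K (Dual K M)) [FiniteDimensional K W] :
    (M ⧸ ⨅ ℓ : W, LinearMap.ker (ℓ : Dual K M)) ≃ₗ[K] Dual K W :=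
  (quotEquivOfEq _ _ W.dualCoannihilator_eq_iInf_ker.symm).trans
    (LinearEquiv.ofBijective _ (Subspace.quotDualCoannihilatorToDual_bijective W))

end Submodule

noncomputable def quotIInfKerEquivDualRangeEvalMap {X H : Type*} [AddCommGroup H] [Module ℝ H]
    (h : X → H) (V : Submodule ℝ (Module.Dual ℝ H)) [FiniteDimensional ℝ V]
    (hinj : Function.Injective (evalMap h V)) :
    (H ⧸ ⨅ ℓ : V, LinearMap.ker (ℓ : Module.Dual ℝ H)) ≃ₗ[ℝ]
      Module.Dual ℝ (LinearMap.range (evalMap h V)) :=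
  V.quotIInfKerEquivDual.trans (LinearEquiv.ofInjective (evalMap h V) hinj).symm.dualMap

/-- Common abstract probe space: if two realizations induce the same
finite-dimensional concept family `C ⊆ ℝ^X` with injective evaluation maps,
then both probe-visible quotients `Hᵢ/K(Vᵢ)` are linearly isomorphic to the
dual `C*`, hence to each other. -/
theorem stmt17 {X : Type*} {H₁ H₂ : Type*}
    [AddCommGroup H₁] [Module ℝ H₁] [FiniteDimensional ℝ H₁]
    [AddCommGroup H₂] [Module ℝ H₂] [FiniteDimensional ℝ H₂]
    (h₁ : X → H₁) (h₂ : X → H₂)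
    (V₁ : Submodule ℝ (Module.Dual ℝ H₁)) (V₂ : Submodule ℝ (Module.Dual ℝ H₂))
    (hinj₁ : Function.Injective (evalMap h₁ V₁))
    (hinj₂ : Function.Injective (evalMap h₂ V₂))
    (hC : LinearMap.range (evalMap h₁ V₁) = LinearMap.range (evalMap h₂ V₂)) :
    Nonempty ((H₁ ⧸ (⨅ ℓ : V₁, LinearMap.ker (ℓ : Module.Dual ℝ H₁))) ≃ₗ[ℝ]
        Module.Dual ℝ (LinearMap.range (evalMap h₁ V₁))) ∧
    Nonempty ((H₂ ⧸ (⨅ ℓ : V₂, LinearMap.ker (ℓ : Module.Dual ℝ H₂))) ≃ₗ[ℝ]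
        Module.Dual ℝ (LinearMap.range (evalMap h₁ V₁))) ∧
    Nonempty ((H₁ ⧸ (⨅ ℓ : V₁, LinearMap.ker (ℓ : Module.Dual ℝ H₁))) ≃ₗ[ℝ]
        (H₂ ⧸ (⨅ ℓ : V₂, LinearMap.ker (ℓ : Module.Dual ℝ H₂)))) := by
  let e₁ := quotIInfKerEquivDualRangeEvalMap h₁ V₁ hinj₁
  let e₂ := (quotIInfKerEquivDualRangeEvalMap h₂ V₂ hinj₂).trans
    (LinearEquiv.ofEq _ _ hC).dualMap
  exact ⟨⟨e₁⟩, ⟨e₂⟩, ⟨e₁.trans e₂.symm⟩⟩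
end

section
/- In the setting of the finite-bank quotient transfer bound, for any a ∈ ℝ^{r₁} define f_a(x) = aᵀz₁(x) and the transferred probe f̃_{a,M}(x) = aᵀT_M z₂(x). Then for every γ > 0, the probability (under μ) that sign(f_a(x)) ≠ sign(f̃_{a,M}(x)) is at most P_μ[|f_a| ≤ γ] + ‖a‖² δ(M)² / (γ² σ_min⁺(W₁)²), where δ(M)² = E_μ‖U₁ᵀ(W₁h₁ − MW₂h₂)‖². -/
/-!
Write `z₁ = R₁ᵀ h₁`, `z₂ = R₂ᵀ h₂` and `T = Σ₁⁻¹ U₁ᵀ M U₂ Σ₂`. Since `U₁` has orthonormal columns,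
the bank-visible mismatch `e = U₁ᵀ (W₁ h₁ - M W₂ h₂)` equals `Σ₁ (z₁ - T z₂)`, so Cauchy–Schwarz gives
`σ₀² (f_a - f̃_{a,M})² ≤ ‖a‖² ‖e‖²`. A sign disagreement with margin `|f_a| > γ` forces
`|f_a - f̃_{a,M}| ≥ γ`, and Markov's inequality for `‖a‖² ‖e‖²` bounds the probability of that event.
-/

open Matrix MeasureTheory

theorem Real.abs_le_abs_sub_of_sign_ne {u v : ℝ} (h : Real.sign u ≠ Real.sign v) :
    |u| ≤ |u - v| := by
  rcases lt_trichotomy u 0 with hu | rfl | hu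
  · have hv : 0 ≤ v := not_lt.mp fun hv => h (by rw [Real.sign_of_neg hu, Real.sign_of_neg hv])
    rw [abs_of_neg hu, abs_of_neg (by linarith)]
    linarith
  · simp
  · have hv : v ≤ 0 := not_lt.mp fun hv => h (by rw [Real.sign_of_pos hu, Real.sign_of_pos hv])
    rw [abs_of_pos hu, abs_of_pos (by linarith)]
    linarith

theorem setOf_sign_ne_subset {X : Type*} (f g : X → ℝ) (γ : ℝ) :
    {x | Real.sign (f x) ≠ Real.sign (g x)} ⊆ {x | |f x| ≤ γ} ∪ {x | γ ≤ |f x - g x|} := by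
  intro x hx
  by_cases hmargin : |f x| ≤ γ
  · exact Or.inl hmargin
  · exact Or.inr ((not_le.mp hmargin).le.trans (Real.abs_le_abs_sub_of_sign_ne hx))

theorem meas_le_const_mul_le_lintegral_div {X : Type*} [MeasurableSpace X] {μ : Measure X}
    {ψ : X → ℝ} (hψ : AEMeasurable ψ μ) {c ε : ℝ} (hc : 0 ≤ c) (hε : 0 < ε) :
    μ {x | ε ≤ c * ψ x}
      ≤ ENNReal.ofReal c * (∫⁻ x, ENNReal.ofReal (ψ x) ∂μ) / ENNReal.ofReal ε := by
  calc μ {x | ε ≤ c * ψ x}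
      ≤ μ {x | ENNReal.ofReal ε ≤ ENNReal.ofReal (c * ψ x)} :=
        measure_mono fun x hx => ENNReal.ofReal_le_ofReal hx
    _ ≤ (∫⁻ x, ENNReal.ofReal (c * ψ x) ∂μ) / ENNReal.ofReal ε :=
        meas_ge_le_lintegral_div (ENNReal.measurable_ofReal.comp_aemeasurable
          (hψ.const_mul c)) (ENNReal.ofReal_pos.mpr hε).ne' ENNReal.ofReal_ne_top
    _ = ENNReal.ofReal c * (∫⁻ x, ENNReal.ofReal (ψ x) ∂μ) / ENNReal.ofReal ε := by
        simp_rw [ENNReal.ofReal_mul hc]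
        rw [lintegral_const_mul' _ _ ENNReal.ofReal_ne_top]

namespace Matrix

variable {ι : Type*} [Fintype ι] [DecidableEq ι]

theorem sq_mul_sum_sq_le_sum_sq_diagonal_mulVec {σ : ι → ℝ} {κ : ℝ} (hκ : 0 ≤ κ)
    (hσ : ∀ i, κ ≤ σ i) (w : ι → ℝ) :
    κ ^ 2 * ∑ i, w i ^ 2 ≤ ∑ i, (diagonal σ *ᵥ w) i ^ 2 := by
  rw [Finset.mul_sum]
  refine Finset.sum_le_sum fun i _ => ?_
  rw [mulVec_diagonal, mul_pow]
  gcongr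
  exact hσ i

theorem sq_mul_sq_dotProduct_le {σ : ι → ℝ} {κ : ℝ} (hκ : 0 ≤ κ) (hσ : ∀ i, κ ≤ σ i)
    (a w : ι → ℝ) :
    κ ^ 2 * (a ⬝ᵥ w) ^ 2 ≤ (∑ i, a i ^ 2) * ∑ i, (diagonal σ *ᵥ w) i ^ 2 :=
  calc κ ^ 2 * (a ⬝ᵥ w) ^ 2 ≤ κ ^ 2 * ((∑ i, a i ^ 2) * ∑ i, w i ^ 2) := by
        gcongr
        exact Finset.sum_mul_sq_le_sq_mul_sq _ _ _
    _ = (∑ i, a i ^ 2) * (κ ^ 2 * ∑ i, w i ^ 2) := by ring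
    _ ≤ (∑ i, a i ^ 2) * ∑ i, (diagonal σ *ᵥ w) i ^ 2 := by
        gcongr
        exact sq_mul_sum_sq_le_sum_sq_diagonal_mulVec hκ hσ w

end Matrix

theorem Matrix.transpose_mulVec_sub_eq {R : Type*} [CommRing R]
    {k₁ k₂ d₁ d₂ r₁ r₂ : Type*} [Fintype k₁] [Fintype k₂] [Fintype d₁] [Fintype d₂]
    [Fintype r₁] [DecidableEq r₁] [Fintype r₂]
    {W₁ : Matrix k₁ d₁ R} {W₂ : Matrix k₂ d₂ R} {U₁ : Matrix k₁ r₁ R} {U₂ : Matrix k₂ r₂ R}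
    {R₁ : Matrix d₁ r₁ R} {R₂ : Matrix d₂ r₂ R} {D₁ : Matrix r₁ r₁ R} {D₂ : Matrix r₂ r₂ R}
    (hU₁ : U₁ᵀ * U₁ = 1) (hD₁ : IsUnit D₁.det)
    (hW₁ : W₁ = U₁ * D₁ * R₁ᵀ) (hW₂ : W₂ = U₂ * D₂ * R₂ᵀ)
    (M : Matrix k₁ k₂ R) (y₁ : d₁ → R) (y₂ : d₂ → R) :
    U₁ᵀ *ᵥ (W₁ *ᵥ y₁ - M *ᵥ (W₂ *ᵥ y₂))
      = D₁ *ᵥ (R₁ᵀ *ᵥ y₁ - (D₁⁻¹ * U₁ᵀ * M * U₂ * D₂) *ᵥ (R₂ᵀ *ᵥ y₂)) := by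
  have hvisible : U₁ᵀ * W₁ = D₁ * R₁ᵀ := by
    rw [hW₁, ← Matrix.mul_assoc, ← Matrix.mul_assoc, hU₁, Matrix.one_mul]
  have htransfer : U₁ᵀ * (M * W₂) = D₁ * ((D₁⁻¹ * U₁ᵀ * M * U₂ * D₂) * R₂ᵀ) := by
    simp only [hW₂, ← Matrix.mul_assoc, mul_nonsing_inv _ hD₁, Matrix.one_mul]
  simp only [mulVec_sub, mulVec_mulVec, hvisible, htransfer]

theorem stmt19_general {X : Type*} [MeasurableSpace X]
    {k₁ d₁ k₂ d₂ r₁ r₂ : ℕ}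
    (W₁ : Matrix (Fin k₁) (Fin d₁) ℝ) (W₂ : Matrix (Fin k₂) (Fin d₂) ℝ)
    (U₁ : Matrix (Fin k₁) (Fin r₁) ℝ) (R₁ : Matrix (Fin d₁) (Fin r₁) ℝ)
    (σ₁ : Fin r₁ → ℝ)
    (U₂ : Matrix (Fin k₂) (Fin r₂) ℝ) (R₂ : Matrix (Fin d₂) (Fin r₂) ℝ)
    (σ₂ : Fin r₂ → ℝ)
    (hU₁ : U₁ᵀ * U₁ = 1)
    (hW₁ : W₁ = U₁ * Matrix.diagonal σ₁ * R₁ᵀ)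
    (hW₂ : W₂ = U₂ * Matrix.diagonal σ₂ * R₂ᵀ)
    (h₁ : X → Fin d₁ → ℝ) (h₂ : X → Fin d₂ → ℝ)
    (hm₁ : Measurable h₁) (hm₂ : Measurable h₂)
    (M : Matrix (Fin k₁) (Fin k₂) ℝ)
    (μ : Measure X)
    (σ₀ : ℝ) (hσ₀ : 0 < σ₀) (hσmin : ∀ i, σ₀ ≤ σ₁ i)
    (a : Fin r₁ → ℝ) (γ : ℝ) (hγ : 0 < γ) :
    μ {x | Real.sign (a ⬝ᵥ R₁ᵀ.mulVec (h₁ x))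
          ≠ Real.sign (a ⬝ᵥ (((Matrix.diagonal σ₁)⁻¹ * U₁ᵀ * M * U₂ *
              Matrix.diagonal σ₂).mulVec (R₂ᵀ.mulVec (h₂ x))))}
      ≤ μ {x | |a ⬝ᵥ R₁ᵀ.mulVec (h₁ x)| ≤ γ}
        + ENNReal.ofReal (∑ i, a i ^ 2)
          * (∫⁻ x, ENNReal.ofReal (∑ i,
              (U₁ᵀ.mulVec (W₁.mulVec (h₁ x)
                - M.mulVec (W₂.mulVec (h₂ x))) i) ^ 2) ∂μ)
          / ENNReal.ofReal (γ ^ 2 * σ₀ ^ 2) := by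
  set T := (diagonal σ₁)⁻¹ * U₁ᵀ * M * U₂ * diagonal σ₂
  set mismatch := fun x => U₁ᵀ *ᵥ (W₁ *ᵥ h₁ x - M *ᵥ (W₂ *ᵥ h₂ x))
  have hdet : IsUnit (diagonal σ₁).det := by
    rw [det_diagonal]
    exact (Finset.prod_pos fun i _ => hσ₀.trans_le (hσmin i)).ne'.isUnit
  have hdeviation : {x | γ ≤ |a ⬝ᵥ R₁ᵀ *ᵥ h₁ x - a ⬝ᵥ T *ᵥ (R₂ᵀ *ᵥ h₂ x)|}
      ⊆ {x | γ ^ 2 * σ₀ ^ 2 ≤ (∑ i, a i ^ 2) * ∑ i, mismatch x i ^ 2} := by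
    intro x hx
    have hsq : γ ^ 2 ≤ (a ⬝ᵥ (R₁ᵀ *ᵥ h₁ x - T *ᵥ (R₂ᵀ *ᵥ h₂ x))) ^ 2 := by
      rw [dotProduct_sub, ← sq_abs (_ - _)]
      exact pow_le_pow_left₀ hγ.le hx 2
    have hcs := sq_mul_sq_dotProduct_le hσ₀.le hσmin a (R₁ᵀ *ᵥ h₁ x - T *ᵥ (R₂ᵀ *ᵥ h₂ x))
    rw [← transpose_mulVec_sub_eq hU₁ hdet hW₁ hW₂] at hcs
    calc γ ^ 2 * σ₀ ^ 2 ≤ σ₀ ^ 2 * (a ⬝ᵥ (R₁ᵀ *ᵥ h₁ x - T *ᵥ (R₂ᵀ *ᵥ h₂ x))) ^ 2 := by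
          rw [mul_comm]; gcongr
      _ ≤ _ := hcs
  calc _ ≤ μ ({x | |a ⬝ᵥ R₁ᵀ *ᵥ h₁ x| ≤ γ}
          ∪ {x | γ ≤ |a ⬝ᵥ R₁ᵀ *ᵥ h₁ x - a ⬝ᵥ T *ᵥ (R₂ᵀ *ᵥ h₂ x)|}) :=
        measure_mono (setOf_sign_ne_subset _ _ γ)
    _ ≤ _ := measure_union_le _ _
    _ ≤ _ := by
        gcongr
        refine (measure_mono hdeviation).trans
          (meas_le_const_mul_le_lintegral_div ?_ (by positivity) (by positivity))
        fun_prop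

/-- Margin bound for classification transfer through the finite-bank quotient:
for `f_a(x) = aᵀ z₁(x)` and the transferred probe `f̃(x) = aᵀ T_M z₂(x)`, the
probability of a sign disagreement is at most the probability of a small margin
plus `‖a‖² δ(M)² / (γ² σ₀²)`, where `δ(M)²` is the expected bank-visible score
mismatch and `σ₀ > 0` lower-bounds the nonzero singular values of `W₁`. -/
theorem stmt19 {X : Type*} [MeasurableSpace X]
    {k₁ d₁ k₂ d₂ r₁ r₂ : ℕ}
    (W₁ : Matrix (Fin k₁) (Fin d₁) ℝ) (W₂ : Matrix (Fin k₂) (Fin d₂) ℝ)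
    (U₁ : Matrix (Fin k₁) (Fin r₁) ℝ) (R₁ : Matrix (Fin d₁) (Fin r₁) ℝ)
    (σ₁ : Fin r₁ → ℝ)
    (U₂ : Matrix (Fin k₂) (Fin r₂) ℝ) (R₂ : Matrix (Fin d₂) (Fin r₂) ℝ)
    (σ₂ : Fin r₂ → ℝ)
    (hU₁ : U₁ᵀ * U₁ = 1) (hR₁ : R₁ᵀ * R₁ = 1) (hσ₁ : ∀ i, 0 < σ₁ i)
    (hU₂ : U₂ᵀ * U₂ = 1) (hR₂ : R₂ᵀ * R₂ = 1) (hσ₂ : ∀ i, 0 < σ₂ i)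
    (hW₁ : W₁ = U₁ * Matrix.diagonal σ₁ * R₁ᵀ)
    (hW₂ : W₂ = U₂ * Matrix.diagonal σ₂ * R₂ᵀ)
    (h₁ : X → Fin d₁ → ℝ) (h₂ : X → Fin d₂ → ℝ)
    (hm₁ : Measurable h₁) (hm₂ : Measurable h₂)
    (M : Matrix (Fin k₁) (Fin k₂) ℝ)
    (μ : Measure X) [IsProbabilityMeasure μ]
    (σ₀ : ℝ) (hσ₀ : 0 < σ₀) (hσmin : ∀ i, σ₀ ≤ σ₁ i)
    (a : Fin r₁ → ℝ) (γ : ℝ) (hγ : 0 < γ) :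
    μ {x | Real.sign (a ⬝ᵥ R₁ᵀ.mulVec (h₁ x))
          ≠ Real.sign (a ⬝ᵥ (((Matrix.diagonal σ₁)⁻¹ * U₁ᵀ * M * U₂ *
              Matrix.diagonal σ₂).mulVec (R₂ᵀ.mulVec (h₂ x))))}
      ≤ μ {x | |a ⬝ᵥ R₁ᵀ.mulVec (h₁ x)| ≤ γ}
        + ENNReal.ofReal (∑ i, a i ^ 2)
          * (∫⁻ x, ENNReal.ofReal (∑ i,
              (U₁ᵀ.mulVec (W₁.mulVec (h₁ x)
                - M.mulVec (W₂.mulVec (h₂ x))) i) ^ 2) ∂μ)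
          / ENNReal.ofReal (γ ^ 2 * σ₀ ^ 2) :=
  stmt19_general W₁ W₂ U₁ R₁ σ₁ U₂ R₂ σ₂ hU₁ hW₁ hW₂ h₁ h₂ hm₁ hm₂ M μ σ₀ hσ₀ hσmin a γ hγ
end
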